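/- Let d ≥ 2, let a ∈ ℝ^d, and let c_{i,j} (i ≠ j) be real constants with c_{i,j} = c_{j,i} > 0 for all i ≠ j. Then the set of points ξ ∈ ℝ^d with pairwise distinct coordinates satisfying ξ_i = a_i + Σ_{j ≠ i} c_{i,j}/(ξ_i − ξ_j) for all i = 1,…,d has exactly d! elements. -/

import Mathlib

/-!
Because `Real.log y = Real.log |y|` and `c` is symmetric, the solutions are the critical points
of the energy `E x = ∑ x i ^ 2 / 2 - ∑ a i * x i - ∑_{i < j} c i j * log |x i - x j|`.
On the open cone where the coordinates are strictly increasing, `E` is bounded below and tends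
to `+∞` at infinity and where two coordinates collide, so it has a minimum there, which is a
solution. Two solutions `ξ`, `η` whose coordinates are ordered in the same way coincide:
subtracting the equations, `u = ξ - η` satisfies
`2 ∑ u i ^ 2 = ∑_{i ≠ j} c i j * (u i - u j) * ((ξ i - ξ j)⁻¹ - (η i - η j)⁻¹) ≤ 0`.
Hence sorting is a bijection from the set of solutions onto the `d!` permutations.
-/

open Finset Filter Topology Real

namespace LogGas

theorem inv_sub_inv_mul_sub_nonpos {K : Type*} [Field K] [LinearOrder K] [IsStrictOrderedRing K]
    {s t : K} (h : 0 < s * t) : (s⁻¹ - t⁻¹) * (s - t) ≤ 0 := by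
  have hs : s ≠ 0 := by rintro rfl; simp at h
  have ht : t ≠ 0 := by rintro rfl; simp at h
  rw [inv_sub_inv hs ht, div_mul_eq_mul_div]
  exact div_nonpos_of_nonpos_of_nonneg (by nlinarith [sq_nonneg (s - t)]) h.le

theorem sub_mul_sub_pos_of_strictMono_comp {ι R : Type*} [LinearOrder ι] [Ring R] [LinearOrder R]
    [IsStrictOrderedRing R] {ξ η : ι → R} {σ : Equiv.Perm ι} (hξ : StrictMono (ξ ∘ σ))
    (hη : StrictMono (η ∘ σ)) {i j : ι} (hij : i ≠ j) : 0 < (ξ i - ξ j) * (η i - η j) := by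
  obtain ⟨i, rfl⟩ := σ.surjective i
  obtain ⟨j, rfl⟩ := σ.surjective j
  rcases lt_or_gt_of_ne (σ.injective.ne_iff.1 hij) with h | h
  · exact mul_pos_of_neg_of_neg (sub_neg.2 (hξ h)) (sub_neg.2 (hη h))
  · exact mul_pos (sub_pos.2 (hξ h)) (sub_pos.2 (hη h))

section

variable {ι : Type*} [Fintype ι] [DecidableEq ι]

theorem sum_sum_erase_comm {M : Type*} [AddCommGroup M] (f : ι → ι → M) :
    ∑ i, ∑ j ∈ univ.erase i, f i j = ∑ i, ∑ j ∈ univ.erase i, f j i := by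
  simp only [sum_erase_eq_sub (mem_univ _), sum_sub_distrib]
  rw [sum_comm]

theorem sum_sum_erase_mul_sub_of_antisymm {R : Type*} [CommRing R] (g : ι → ι → R) (u : ι → R)
    (hg : ∀ i j, i ≠ j → g j i = -g i j) :
    ∑ i, ∑ j ∈ univ.erase i, g i j * (u i - u j) = 2 * ∑ i, u i * ∑ j ∈ univ.erase i, g i j := by
  have hswap : ∑ i, ∑ j ∈ univ.erase i, g i j * u j
      = -∑ i, u i * ∑ j ∈ univ.erase i, g i j := by
    rw [sum_sum_erase_comm]
    simp only [mul_sum, ← sum_neg_distrib]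
    refine sum_congr rfl fun i _ => sum_congr rfl fun j hj => ?_
    rw [hg i j (ne_of_mem_erase hj).symm]
    ring
  simp only [mul_sub, sum_sub_distrib, hswap, ← sum_mul, mul_comm (∑ j ∈ _, _)]
  ring

def IsSolution (a : ι → ℝ) (c : ι → ι → ℝ) (ξ : ι → ℝ) : Prop :=
  ∀ i, ξ i = a i + ∑ j ∈ univ.erase i, c i j / (ξ i - ξ j)

def solutions (a : ι → ℝ) (c : ι → ι → ℝ) : Set (ι → ℝ) :=
  {ξ | Function.Injective ξ ∧ IsSolution a c ξ}

variable {a : ι → ℝ} {c : ι → ι → ℝ}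

theorem IsSolution.comp_perm {ξ : ι → ℝ} (h : IsSolution a c ξ) (σ : Equiv.Perm ι) :
    IsSolution (a ∘ σ) (fun i j => c (σ i) (σ j)) (ξ ∘ σ) := by
  intro i
  simp only [Function.comp_apply]
  conv_lhs => rw [h (σ i)]
  congr 1
  exact (sum_equiv σ (by simp) (by simp)).symm

theorem IsSolution.eq_of_forall_sub_mul_sub_pos (hsymm : ∀ i j, i ≠ j → c i j = c j i)
    (hc : ∀ i j, i ≠ j → 0 ≤ c i j) {ξ η : ι → ℝ} (hξ : IsSolution a c ξ)
    (hη : IsSolution a c η) (hsign : ∀ i j, i ≠ j → 0 < (ξ i - ξ j) * (η i - η j)) :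
    ξ = η := by
  set g : ι → ι → ℝ := fun i j => c i j * ((ξ i - ξ j)⁻¹ - (η i - η j)⁻¹)
  have hg : ∀ i j, i ≠ j → g j i = -g i j := by
    intro i j hij
    simp only [g, hsymm j i hij.symm, ← neg_sub (ξ i), ← neg_sub (η i), inv_neg]
    ring
  have hdiff : ∀ i, ξ i - η i = ∑ j ∈ univ.erase i, g i j := by
    intro i
    conv_lhs => rw [hξ i, hη i]
    simp only [g, mul_sub, sum_sub_distrib, div_eq_mul_inv]
    ring
  have hsq : 2 * ∑ i, (ξ i - η i) ^ 2
      = ∑ i, ∑ j ∈ univ.erase i, g i j * ((ξ i - η i) - (ξ j - η j)) := by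
    rw [sum_sum_erase_mul_sub_of_antisymm g _ hg]
    simp only [sq]
    congr 1
    exact sum_congr rfl fun i _ => congrArg _ (hdiff i)
  have hnonpos : ∑ i, ∑ j ∈ univ.erase i, g i j * ((ξ i - η i) - (ξ j - η j)) ≤ 0 := by
    refine sum_nonpos fun i _ => sum_nonpos fun j hj => ?_
    have hij := (ne_of_mem_erase hj).symm
    rw [show (ξ i - η i) - (ξ j - η j) = (ξ i - ξ j) - (η i - η j) by ring, mul_assoc]
    exact mul_nonpos_of_nonneg_of_nonpos (hc i j hij) (inv_sub_inv_mul_sub_nonpos (hsign i j hij))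
  have hzero : ∑ i, (ξ i - η i) ^ 2 = 0 :=
    le_antisymm (by linarith) (sum_nonneg fun i _ => sq_nonneg _)
  funext i
  have := (sum_eq_zero_iff_of_nonneg fun i _ => sq_nonneg (ξ i - η i)).1 hzero i (mem_univ i)
  exact sub_eq_zero.1 (pow_eq_zero_iff two_ne_zero |>.1 this)

noncomputable def energy (a : ι → ℝ) (c : ι → ι → ℝ) (x : ι → ℝ) : ℝ :=
  (∑ i, x i ^ 2) / 2 - ∑ i, a i * x i - (∑ i, ∑ j ∈ univ.erase i, c i j * log (x i - x j)) / 2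

noncomputable def penalty (c : ι → ι → ℝ) (x : ι → ℝ) : ℝ :=
  ∑ i, ∑ j ∈ univ.erase i, c i j * log⁺ (x i - x j)⁻¹

theorem penalty_nonneg (hc : ∀ i j, i ≠ j → 0 ≤ c i j) (x : ι → ℝ) : 0 ≤ penalty c x :=
  sum_nonneg fun i _ => sum_nonneg fun j hj =>
    mul_nonneg (hc i j (ne_of_mem_erase hj).symm) Real.posLog_nonneg

theorem mul_posLog_le_penalty (hc : ∀ i j, i ≠ j → 0 ≤ c i j) (x : ι → ℝ) {k l : ι}
    (hkl : k ≠ l) : c k l * log⁺ (x k - x l)⁻¹ ≤ penalty c x := by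
  have hterm : ∀ i, ∀ j ∈ univ.erase i, 0 ≤ c i j * log⁺ (x i - x j)⁻¹ := fun i j hj =>
    mul_nonneg (hc i j (ne_of_mem_erase hj).symm) Real.posLog_nonneg
  exact (single_le_sum (hterm k) (mem_erase.2 ⟨hkl.symm, mem_univ l⟩)).trans
    (single_le_sum (fun i _ => sum_nonneg (hterm i)) (mem_univ k))

theorem le_energy (a : ι → ℝ) (hc : ∀ i j, i ≠ j → 0 ≤ c i j) (x : ι → ℝ) :
    ‖x‖ ^ 2 / 2 - (∑ i, |a i| + ∑ i, ∑ j ∈ univ.erase i, c i j) * ‖x‖ + penalty c x / 2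
      ≤ energy a c x := by
  have hsq : ‖x‖ ^ 2 ≤ ∑ i, x i ^ 2 := by
    refine (Real.le_sqrt (norm_nonneg x) (sum_nonneg fun i _ => sq_nonneg (x i))).1 ?_
    refine (pi_norm_le_iff_of_nonneg (Real.sqrt_nonneg _)).2 fun i => ?_
    exact Real.abs_le_sqrt (single_le_sum (fun j _ => sq_nonneg (x j)) (mem_univ i))
  have hlin : ∑ i, a i * x i ≤ (∑ i, |a i|) * ‖x‖ := by
    rw [sum_mul]
    refine sum_le_sum fun i _ => (le_abs_self _).trans ?_
    rw [abs_mul]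
    exact mul_le_mul_of_nonneg_left (norm_le_pi_norm x i) (abs_nonneg _)
  -- `-log y = log⁺ y⁻¹ - log⁺ y` and `log⁺ y ≤ |y| ≤ 2 ‖x‖` for `y = x i - x j`
  have hlog : penalty c x - 2 * (∑ i, ∑ j ∈ univ.erase i, c i j) * ‖x‖
      ≤ -∑ i, ∑ j ∈ univ.erase i, c i j * log (x i - x j) := by
    simp only [penalty, mul_sum, sum_mul, ← sum_sub_distrib, ← sum_neg_distrib]
    refine sum_le_sum fun i _ => sum_le_sum fun j hj => ?_
    have hposLog : log⁺ (x i - x j) ≤ 2 * ‖x‖ := by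
      rw [Real.posLog_apply]
      refine max_le (by positivity) ?_
      calc log (x i - x j) ≤ |x i - x j| := by
            rw [← Real.log_abs]; exact Real.log_le_self (abs_nonneg _)
        _ ≤ |x i| + |x j| := abs_sub _ _
        _ ≤ ‖x‖ + ‖x‖ := add_le_add (norm_le_pi_norm x i) (norm_le_pi_norm x j)
        _ = 2 * ‖x‖ := (two_mul _).symm
    rw [← Real.posLog_sub_posLog_inv]
    nlinarith [hc i j (ne_of_mem_erase hj).symm]
  rw [energy]
  linarith

theorem exists_norm_lt_of_energy_le (a : ι → ℝ) (hc : ∀ i j, i ≠ j → 0 ≤ c i j) (M : ℝ) :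
    ∃ R, ∀ x, energy a c x ≤ M → ‖x‖ < R := by
  set K := ∑ i, |a i| + ∑ i, ∑ j ∈ univ.erase i, c i j
  refine ⟨M + (K + 1) ^ 2 / 2 + 1, fun x hx => ?_⟩
  nlinarith [le_energy a hc x, penalty_nonneg hc x, sq_nonneg (‖x‖ - K - 1)]

theorem exists_lt_sub_of_energy_le (a : ι → ℝ) (hpos : ∀ i j, i ≠ j → 0 < c i j) (M : ℝ) :
    ∃ δ > 0, ∀ x, energy a c x ≤ M → ∀ k l, k ≠ l → 0 < x k - x l → δ < x k - x l := by
  set K := ∑ i, |a i| + ∑ i, ∑ j ∈ univ.erase i, c i j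
  have hev : ∀ᶠ y in 𝓝[>] (0 : ℝ), ∀ k l, k ≠ l → 2 * M + K ^ 2 < c k l * log⁺ y⁻¹ := by
    simp only [eventually_all]
    intro k l hkl
    have hlog : Tendsto (fun y : ℝ => log⁺ y⁻¹) (𝓝[>] 0) atTop :=
      tendsto_atTop_mono (fun y => le_max_right _ _)
        (tendsto_log_atTop.comp tendsto_inv_nhdsGT_zero)
    exact (hlog.const_mul_atTop (hpos k l hkl)).eventually_gt_atTop _
  obtain ⟨u, hu, hsub⟩ := mem_nhdsGT_iff_exists_Ioo_subset.1 hev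
  refine ⟨u / 2, half_pos hu, fun x hx k l hkl hgap => ?_⟩
  by_contra! hle
  have hc : ∀ i j, i ≠ j → 0 ≤ c i j := fun i j h => (hpos i j h).le
  nlinarith [hsub ⟨hgap, by linarith⟩ k l hkl, le_energy a hc x, mul_posLog_le_penalty hc x hkl,
    sq_nonneg (‖x‖ - K)]

theorem continuousOn_energy : ContinuousOn (energy a c) {x | Function.Injective x} := by
  refine ContinuousOn.sub (by fun_prop) (ContinuousOn.div_const ?_ _)
  refine continuousOn_finsetSum _ fun i _ => continuousOn_finsetSum _ fun j hj => ?_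
  refine continuousOn_const.mul (ContinuousOn.log (by fun_prop) fun x hx => ?_)
  exact sub_ne_zero.2 (hx.ne (ne_of_mem_erase hj).symm)

theorem hasDerivAt_energy_update (hsymm : ∀ i j, i ≠ j → c i j = c j i) {z : ι → ℝ}
    (hz : Function.Injective z) (i : ι) :
    HasDerivAt (fun t => energy a c (Function.update z i t))
      (z i - a i - ∑ j ∈ univ.erase i, c i j / (z i - z j)) (z i) := by
  set e : ι → ℝ := Pi.single i 1
  have hcoord : ∀ k, HasDerivAt (fun t => Function.update z i t k) (e k) (z i) :=
    hasDerivAt_pi.1 (hasDerivAt_update z i (z i))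
  have hsq : HasDerivAt (fun t => ∑ k, Function.update z i t k ^ 2) (∑ k, 2 * z k * e k) (z i) :=
    HasDerivAt.fun_sum fun k _ => ((hcoord k).fun_pow 2).congr_deriv (by simp)
  have hlin : HasDerivAt (fun t => ∑ k, a k * Function.update z i t k) (∑ k, a k * e k) (z i) :=
    HasDerivAt.fun_sum fun k _ => (hcoord k).const_mul (a k)
  have hlog : HasDerivAt (fun t => ∑ k, ∑ j ∈ univ.erase k,
        c k j * log (Function.update z i t k - Function.update z i t j))
      (∑ k, ∑ j ∈ univ.erase k, c k j / (z k - z j) * (e k - e j)) (z i) := by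
    refine HasDerivAt.fun_sum fun k _ => HasDerivAt.fun_sum fun j hj => ?_
    have hne : z k - z j ≠ 0 := sub_ne_zero.2 (hz.ne (ne_of_mem_erase hj).symm)
    refine ((((hcoord k).sub (hcoord j)).log (by simpa using hne)).const_mul (c k j)).congr_deriv ?_
    simp only [Pi.sub_apply, Function.update_eq_self]
    ring
  refine (((hsq.div_const 2).sub hlin).sub (hlog.div_const 2)).congr_deriv ?_
  have hanti : ∀ k j, k ≠ j → c j k / (z j - z k) = -(c k j / (z k - z j)) := by
    intro k j hkj
    rw [hsymm j k hkj.symm, ← neg_sub (z k), div_neg]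
  rw [sum_sum_erase_mul_sub_of_antisymm _ _ hanti]
  simp [e, Pi.single_apply]

theorem isSolution_of_isLocalMin (hsymm : ∀ i j, i ≠ j → c i j = c j i) {z : ι → ℝ}
    (hz : Function.Injective z) (hmin : IsLocalMin (energy a c) z) : IsSolution a c z := by
  intro i
  have hmin' : IsLocalMin (energy a c) (Function.update z i (z i)) := by
    rwa [Function.update_eq_self]
  have := (hmin'.comp_continuous (hasDerivAt_update z i (z i)).continuousAt).hasDerivAt_eq_zero
    (hasDerivAt_energy_update hsymm hz i)
  linarith

end

theorem exists_strictMono_isSolution {d : ℕ} (a : Fin d → ℝ) {c : Fin d → Fin d → ℝ}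
    (hsymm : ∀ i j, i ≠ j → c i j = c j i) (hpos : ∀ i j, i ≠ j → 0 < c i j) :
    ∃ ξ, StrictMono ξ ∧ IsSolution a c ξ := by
  set x₀ : Fin d → ℝ := fun i => i
  obtain ⟨R, hR⟩ := exists_norm_lt_of_energy_le a (fun i j h => (hpos i j h).le) (energy a c x₀)
  obtain ⟨δ, hδ, hgap⟩ := exists_lt_sub_of_energy_le a hpos (energy a c x₀)
  set t := {x : Fin d → ℝ | ‖x‖ ≤ R ∧ ∀ k l, l < k → δ ≤ x k - x l}
  set s := {x : Fin d → ℝ | ‖x‖ < R ∧ ∀ k l, l < k → δ < x k - x l}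
  have hmem : ∀ x, (∀ k l, l < k → 0 < x k - x l) → energy a c x ≤ energy a c x₀ → x ∈ s :=
    fun x hx hle => ⟨hR x hle, fun k l hlk => hgap x hle k l hlk.ne' (hx k l hlk)⟩
  have hst : s ⊆ t := fun x hx => ⟨hx.1.le, fun k l hlk => (hx.2 k l hlk).le⟩
  have ht_strictMono : ∀ x ∈ t, StrictMono x := fun x hx l k hlk => by
    linarith [hx.2 k l hlk]
  have hs : IsOpen s := by
    simp only [s, Set.ofPred_and, Set.ofPred_forall]
    exact (isOpen_lt continuous_norm continuous_const).inter (isOpen_iInter_of_finite fun k =>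
      isOpen_iInter_of_finite fun l => isOpen_iInter_of_finite fun _ =>
        isOpen_lt continuous_const ((continuous_apply k).sub (continuous_apply l)))
  have ht : IsCompact t := by
    refine (isCompact_closedBall (0 : Fin d → ℝ) R).of_isClosed_subset ?_
      fun x hx => mem_closedBall_zero_iff.2 hx.1
    simp only [t, Set.ofPred_and, Set.ofPred_forall]
    exact (isClosed_le continuous_norm continuous_const).inter (isClosed_iInter fun k =>
      isClosed_iInter fun l => isClosed_iInter fun _ =>
        isClosed_le continuous_const ((continuous_apply k).sub (continuous_apply l)))
  have hx₀ : x₀ ∈ s := hmem x₀ (fun k l hlk => by simpa [x₀] using hlk) le_rfl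
  have hout : ∀ x ∈ t \ s, energy a c x₀ < energy a c x := fun x hx => by
    by_contra! hle
    exact hx.2 (hmem x (fun k l hlk => hδ.trans_le (hx.1.2 k l hlk)) hle)
  obtain ⟨z, hzs, hmin⟩ := ht.exists_isLocalMin_mem_open hst
    (continuousOn_energy.mono fun x hx => (ht_strictMono x hx).injective) (hst hx₀) hout hs
  have hz := ht_strictMono z (hst hzs)
  exact ⟨z, hz, isSolution_of_isLocalMin hsymm hz.injective hmin⟩

theorem bijective_sort_solutions {d : ℕ} (a : Fin d → ℝ) {c : Fin d → Fin d → ℝ}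
    (hsymm : ∀ i j, i ≠ j → c i j = c j i) (hpos : ∀ i j, i ≠ j → 0 < c i j) :
    Function.Bijective fun ξ : solutions a c => Tuple.sort ξ.1 := by
  have hsorted : ∀ ξ : Fin d → ℝ, Function.Injective ξ → StrictMono (ξ ∘ Tuple.sort ξ) :=
    fun ξ hξ => (Tuple.monotone_sort ξ).strictMono_of_injective (hξ.comp (Equiv.injective _))
  constructor
  · rintro ⟨ξ, hξ_inj, hξ⟩ ⟨η, hη_inj, hη⟩ (h : Tuple.sort ξ = Tuple.sort η)
    have hξs := hsorted ξ hξ_inj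
    have hηs := hsorted η hη_inj
    rw [h] at hξs
    exact Subtype.ext (hξ.eq_of_forall_sub_mul_sub_pos hsymm (fun i j h => (hpos i j h).le) hη
      fun i j hij => sub_mul_sub_pos_of_strictMono_comp hξs hηs hij)
  · intro σ
    obtain ⟨ζ, hζ_mono, hζ⟩ := exists_strictMono_isSolution (a ∘ σ)
      (c := fun i j => c (σ i) (σ j)) (fun i j hij => hsymm _ _ (σ.injective.ne hij))
      (fun i j hij => hpos _ _ (σ.injective.ne hij))
    have hξ := hζ.comp_perm σ.symm
    simp only [Function.comp_assoc, Equiv.self_comp_symm, Function.comp_id,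
      Equiv.apply_symm_apply] at hξ
    refine ⟨⟨ζ ∘ σ.symm, hζ_mono.injective.comp σ.symm.injective, hξ⟩, ?_⟩
    have hcomp : (ζ ∘ σ.symm) ∘ σ = ζ := by ext; simp
    refine (Tuple.eq_sort_iff.2 ⟨?_, fun i j hij heq => absurd ?_ (hζ_mono hij).ne⟩).symm
    · rw [hcomp]; exact hζ_mono.monotone
    · simpa using heq

end LogGas

theorem card_solutions_eq_factorial
    (d : ℕ) (a : Fin d → ℝ) (c : Fin d → Fin d → ℝ)
    (hsymm : ∀ i j : Fin d, i ≠ j → c i j = c j i)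
    (hpos : ∀ i j : Fin d, i ≠ j → 0 < c i j) :
    ({ξ : Fin d → ℝ | (∀ i j : Fin d, i ≠ j → ξ i ≠ ξ j) ∧
        ∀ i : Fin d, ξ i = a i + ∑ j ∈ Finset.univ.erase i, c i j / (ξ i - ξ j)}).Finite ∧
      ({ξ : Fin d → ℝ | (∀ i j : Fin d, i ≠ j → ξ i ≠ ξ j) ∧
        ∀ i : Fin d, ξ i = a i + ∑ j ∈ Finset.univ.erase i, c i j / (ξ i - ξ j)}).ncard
        = Nat.factorial d := by
  have hS : {ξ : Fin d → ℝ | (∀ i j : Fin d, i ≠ j → ξ i ≠ ξ j) ∧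
      ∀ i : Fin d, ξ i = a i + ∑ j ∈ Finset.univ.erase i, c i j / (ξ i - ξ j)}
      = LogGas.solutions a c :=
    Set.ext fun ξ => and_congr_left' Function.injective_iff_pairwise_ne.symm
  have hbij := LogGas.bijective_sort_solutions a hsymm hpos
  rw [hS]
  refine ⟨Set.finite_coe_iff.1 (Finite.of_injective _ hbij.1), ?_⟩
  rw [← Nat.card_coe_set_eq, Nat.card_eq_of_bijective _ hbij, Nat.card_perm, Nat.card_fin]
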